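/- Let μ be a Krull valuation on K̄[x] with K̄ algebraically closed, which is value-transcendental over K̄ (the quotient μK̄(x)/μK̄ is not torsion). Then there exist a ∈ K̄ and δ = μ(x−a) such that μ = μ_{a,δ}. -/

import Mathlib

/-!
Over an algebraically closed field every nonzero polynomial is a constant times a product of
linear factors, so if every `μ (x - a)` were torsion modulo `μ K̄`, then so would be every value of
`μ`; value-transcendence therefore yields an `a` with `μ (x - a)` torsion-free modulo `μ K̄`.
For such an `a`, two terms `c (x - a)^i`, `d (x - a)^j` (`i < j`) of the Taylor expansion at `a`
can only have equal values when both are `⊤`, as otherwise `(j - i) μ (x - a) = μ (c / d)`.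
Hence `μ` of the expansion is the minimum of the values of its terms, i.e. the truncation.
-/

open Polynomial

variable {K : Type*} [Field K] {Γ : Type*} [AddCommGroup Γ] [LinearOrder Γ] [IsOrderedAddMonoid Γ]

/-- The `i`-th coefficient of the `q`-expansion of `f`. -/
noncomputable def qCoeff (q f : Polynomial K) (i : ℕ) : Polynomial K :=
  f / q ^ i % q

/-- The truncation `ν_q` of `w` at `q` :
`ν_q(f) = min_i ν(f_i q^i)` over the `q`-expansion `f = Σ f_i q^i`. -/
noncomputable def trunc (w : Polynomial K → WithTop Γ) (q f : Polynomial K) : WithTop Γ :=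
  (Finset.range (f.natDegree + 1)).inf fun i => w (qCoeff q f i * q ^ i)

/-- `b` is an admissible index in the definition of `ε(f)`. -/
def ValidIdx (w : Polynomial K → WithTop Γ) (f : Polynomial K) (b : ℕ) : Prop :=
  1 ≤ b ∧ b ≤ f.natDegree ∧ w f ≠ ⊤ ∧ w (Polynomial.hasseDeriv b f) ≠ ⊤

/-- `(w(g) - w(∂_c g))/c ≤ (w(f) - w(∂_b f))/b`, written multiplicatively
(cross-multiplied) to stay inside `WithTop Γ`. -/
def RatioLE (w : Polynomial K → WithTop Γ) (g : Polynomial K) (c : ℕ)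
    (f : Polynomial K) (b : ℕ) : Prop :=
  b • w g + c • w (Polynomial.hasseDeriv b f) ≤ c • w f + b • w (Polynomial.hasseDeriv c g)

/-- `f` is a generator of the support of `w`. -/
def IsGenSupp (w : Polynomial K → WithTop Γ) (f : Polynomial K) : Prop :=
  ∀ g, w g = ⊤ ↔ f ∣ g

/-- `ε(f) ≥ ε(Q)` (for the valuation `w`), taking the conventions
`ε(f) = -∞` if `deg f = 0` (more generally, if the defining set is empty) and
`ε(f) = ∞` if `f` generates the support of `w`. -/
def EpsGE (w : Polynomial K → WithTop Γ) (f Q : Polynomial K) : Prop :=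
  IsGenSupp w f ∨
    (¬ IsGenSupp w Q ∧
      ((∀ c, ¬ ValidIdx w Q c) ∨
        ∃ b, ValidIdx w f b ∧ ∀ c, ValidIdx w Q c → RatioLE w Q c f b))

/-- `Q` is a key polynomial for `w` : `Q` is monic and
`ε(f) ≥ ε(Q)` implies `deg f ≥ deg Q`. -/
def IsKeyPoly (w : Polynomial K → WithTop Γ) (Q : Polynomial K) : Prop :=
  Q.Monic ∧ ∀ f : Polynomial K, f ≠ 0 → EpsGE w f Q → Q.natDegree ≤ f.natDegree

theorem AddValuation.map_sum_eq_inf {R Γ₀ ι : Type*} [Ring R] [LinearOrderedAddCommMonoidWithTop Γ₀]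
    (v : AddValuation R Γ₀) (s : Finset ι) (f : ι → R)
    (h : ∀ i ∈ s, ∀ j ∈ s, i ≠ j → v (f i) = v (f j) → v (f i) = ⊤) :
    v (∑ i ∈ s, f i) = s.inf fun i => v (f i) := by
  classical
  refine le_antisymm ?_ (v.map_le_sum fun i hi => Finset.inf_le hi)
  rcases eq_or_ne (s.inf fun i => v (f i)) ⊤ with htop | htop
  · exact htop ▸ le_top
  have hs : s.Nonempty := Finset.nonempty_iff_ne_empty.mpr fun hs => htop (hs ▸ Finset.inf_empty)
  obtain ⟨j, hj, hjmin⟩ := Finset.exists_mem_eq_inf s hs fun i => v (f i)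
  have hlt : ∀ i ∈ s \ {j}, v (f j) < v (f i) := by
    intro i hi
    obtain ⟨his, hij⟩ : i ∈ s ∧ i ≠ j := by simpa using hi
    refine lt_of_le_of_ne (hjmin ▸ Finset.inf_le his) fun heq => htop ?_
    rw [hjmin]
    exact h j hj i his hij.symm heq
  rw [Finset.sum_eq_add_sum_sdiff_singleton_of_mem hj,
    v.map_add_eq_of_lt_left (v.map_lt_sum (hjmin ▸ htop) hlt), hjmin]

section Taylor

variable (a : K) (p : K[X])

theorem sum_range_taylor_coeff_mul_X_sub_C_pow :
    ∑ i ∈ Finset.range (p.natDegree + 1), C ((taylor a p).coeff i) * (X - C a) ^ i = p := by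
  conv_rhs => rw [← sum_taylor_eq p a]
  rw [sum_over_range _ (fun n => by simp), natDegree_taylor]

theorem taylor_coeff_eq_eval_divByMonic (i : ℕ) :
    (taylor a p).coeff i = (p /ₘ (X - C a) ^ i).eval a := by
  have hmonic : ((X - C a) ^ i).Monic := (monic_X_sub_C a).pow i
  have htaylor : taylor a (X - C a) = X := by simp [taylor_X, taylor_C]
  have hrem : (taylor a (p %ₘ (X - C a) ^ i)).coeff i = 0 := by
    refine coeff_eq_zero_of_degree_lt ?_
    rw [degree_taylor]
    simpa using degree_modByMonic_lt p hmonic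
  conv_lhs => rw [← modByMonic_add_div p ((X - C a) ^ i)]
  rw [map_add, coeff_add, hrem, taylor_mul, taylor_pow, htaylor, zero_add, ← taylor_coeff_zero]
  simpa using coeff_X_pow_mul (taylor a (p /ₘ (X - C a) ^ i)) i 0

theorem qCoeff_X_sub_C (i : ℕ) : qCoeff (X - C a) p i = C ((taylor a p).coeff i) := by
  rw [qCoeff, ← divByMonic_eq_div p ((monic_X_sub_C a).pow i), mod_X_sub_C_eq_C_eval,
    taylor_coeff_eq_eval_divByMonic]

end Taylor

section Torsion

variable (μ : AddValuation K[X] (WithTop Γ))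

def IsTorsionModConst (γ : WithTop Γ) : Prop :=
  ∃ n : ℕ, 0 < n ∧ ∃ c : K, c ≠ 0 ∧ n • γ = μ (C c)

variable {μ}

theorem nsmul_map_C (n : ℕ) (c : K) : n • μ (C c) = μ (C (c ^ n)) := by
  rw [C_pow, μ.map_pow]

theorem isTorsionModConst_map_C {c : K} (hc : c ≠ 0) : IsTorsionModConst μ (μ (C c)) :=
  ⟨1, one_pos, c, hc, one_nsmul _⟩

theorem IsTorsionModConst.exists_common_nsmul {γ γ' : WithTop Γ} (h : IsTorsionModConst μ γ)
    (h' : IsTorsionModConst μ γ') :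
    ∃ n : ℕ, 0 < n ∧ ∃ c d : K, c ≠ 0 ∧ d ≠ 0 ∧ n • γ = μ (C c) ∧ n • γ' = μ (C d) := by
  obtain ⟨n, hn, c, hc, hγ⟩ := h
  obtain ⟨n', hn', c', hc', hγ'⟩ := h'
  refine ⟨n * n', Nat.mul_pos hn hn', c ^ n', c' ^ n, pow_ne_zero _ hc, pow_ne_zero _ hc', ?_, ?_⟩
  · rw [mul_nsmul, hγ, nsmul_map_C]
  · rw [mul_comm, mul_nsmul, hγ', nsmul_map_C]

theorem IsTorsionModConst.add {γ γ' : WithTop Γ} (h : IsTorsionModConst μ γ)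
    (h' : IsTorsionModConst μ γ') : IsTorsionModConst μ (γ + γ') := by
  obtain ⟨n, hn, c, d, hc, hd, hγ, hγ'⟩ := h.exists_common_nsmul h'
  exact ⟨n, hn, c * d, mul_ne_zero hc hd, by rw [nsmul_add, hγ, hγ', C_mul, μ.map_mul]⟩

theorem isTorsionModConst_of_forall_X_sub_C [IsAlgClosed K]
    (h : ∀ r : K, IsTorsionModConst μ (μ (X - C r))) {p : K[X]} (hp : p ≠ 0) :
    IsTorsionModConst μ (μ p) := by
  have hprod : IsTorsionModConst μ (μ (p.roots.map fun r => X - C r).prod) := by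
    refine Multiset.prod_induction (fun q => IsTorsionModConst μ (μ q)) _ ?_ ?_ ?_
    · intro q q' hq hq'
      rw [μ.map_mul]
      exact hq.add hq'
    · simpa using isTorsionModConst_map_C (μ := μ) one_ne_zero
    · simp only [Multiset.mem_map]
      rintro _ ⟨r, -, rfl⟩
      exact h r
  rw [(IsAlgClosed.splits p).eq_prod_roots, μ.map_mul]
  exact (isTorsionModConst_map_C (leadingCoeff_ne_zero.mpr hp)).add hprod

end Torsion

section Expansion

variable {μ : AddValuation K[X] (WithTop Γ)}

theorem map_C_mul_pow_eq_top_of_eq {q : K[X]} (hq : ¬ IsTorsionModConst μ (μ q)) {i j : ℕ}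
    (hij : i < j) (c d : K) (h : μ (C c * q ^ i) = μ (C d * q ^ j)) : μ (C c * q ^ i) = ⊤ := by
  by_contra hne
  obtain ⟨m, rfl⟩ := Nat.exists_eq_add_of_lt hij
  simp only [μ.map_mul, μ.map_pow] at h hne
  have hc : c ≠ 0 := by
    rintro rfl
    simp at hne
  have hd : d ≠ 0 := by
    rintro rfl
    simp_all
  have hcancel : μ (C c) = μ (C d) + (m + 1) • μ q := by
    refine WithTop.add_right_cancel (WithTop.add_ne_top.mp hne).2 ?_
    rw [h, add_assoc i, add_nsmul]
    abel
  refine hq ⟨m + 1, m.succ_pos, c / d, div_ne_zero hc hd, ?_⟩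
  calc (m + 1) • μ q = (m + 1) • μ q + μ (C (d * d⁻¹)) := by
        rw [mul_inv_cancel₀ hd, C_1, μ.map_one, add_zero]
    _ = μ (C c) + μ (C d⁻¹) := by
        rw [hcancel, C_mul, μ.map_mul]
        abel
    _ = μ (C (c / d)) := by rw [div_eq_mul_inv, C_mul, μ.map_mul]

theorem trunc_X_sub_C_eq_of_not_isTorsionModConst {a : K}
    (ha : ¬ IsTorsionModConst μ (μ (X - C a))) (p : K[X]) : trunc μ (X - C a) p = μ p := by
  simp only [trunc, qCoeff_X_sub_C]
  conv_rhs => rw [← sum_range_taylor_coeff_mul_X_sub_C_pow a p]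
  refine (μ.map_sum_eq_inf _ _ fun i _ j _ hij heq => ?_).symm
  rcases hij.lt_or_gt with hlt | hgt
  · exact map_C_mul_pow_eq_top_of_eq ha hlt _ _ heq
  · exact heq ▸ map_C_mul_pow_eq_top_of_eq ha hgt _ _ heq.symm

end Expansion

/-- Value-transcendence of `μ` is encoded by `htor`: `μ f - μ g` is not torsion modulo `μ K`. -/
theorem stmt14_general [IsAlgClosed K] (μ : AddValuation (Polynomial K) (WithTop Γ))
    (f g : Polynomial K) (hf : f ≠ 0) (hg : g ≠ 0)
    (htor : ∀ n : ℕ, 0 < n → ∀ c d : K, c ≠ 0 → d ≠ 0 →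
      n • μ f + μ (C d) ≠ n • μ g + μ (C c)) :
    ∃ a : K, ∀ p : Polynomial K, trunc (⇑μ) (X - C a) p = μ p := by
  obtain ⟨a, ha⟩ : ∃ a : K, ¬ IsTorsionModConst μ (μ (X - C a)) := by
    by_contra! h
    obtain ⟨n, hn, c, d, hc, hd, hfc, hgd⟩ :=
      (isTorsionModConst_of_forall_X_sub_C h hf).exists_common_nsmul
        (isTorsionModConst_of_forall_X_sub_C h hg)
    exact htor n hn c d hc hd (by rw [hfc, hgd, add_comm])
  exact ⟨a, trunc_X_sub_C_eq_of_not_isTorsionModConst ha⟩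

/-- If `μ` is a value-transcendental Krull valuation on `K̄[x]`
(encoded: there are nonzero `f, g` with `μ(f) - μ(g)` non-torsion modulo `μK̄`), then
there is `a ∈ K̄` such that `μ = μ_{a,δ}` with `δ = μ(x-a)`. -/
theorem stmt14 [IsAlgClosed K] (μ : AddValuation (Polynomial K) (WithTop Γ))
    (hKrull : ∀ p : Polynomial K, p ≠ 0 → μ p ≠ ⊤)
    (f g : Polynomial K) (hf : f ≠ 0) (hg : g ≠ 0)
    (htor : ∀ n : ℕ, 0 < n → ∀ c d : K, c ≠ 0 → d ≠ 0 →
      n • μ f + μ (C d) ≠ n • μ g + μ (C c)) :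
    ∃ a : K, ∀ p : Polynomial K, trunc (⇑μ) (X - C a) p = μ p :=
  stmt14_general μ f g hf hg htor
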